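/- arXiv:1701.08298 — 4 statements merged into one kernel-verified Lean document; each statement's English description precedes it below -/
import Mathlib

section
/- Let μ = N(0, Q) be a Gaussian measure on an infinite-dimensional separable Hilbert space H with injective trace-class covariance Q. Then μ(Q^{1/2}(H)) = 0, i.e., the Gaussian measure assigns measure zero to its Cameron–Martin space. -/
open MeasureTheory ProbabilityTheory
open scoped InnerProductSpace

variable {H : Type*} [NormedAddCommGroup H] [InnerProductSpace ℝ H] [CompleteSpace H]
  [MeasurableSpace H] [BorelSpace H]

/-- `μ` is a Gaussian measure with mean `m` and covariance `P`. -/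
def IsGaussianMeasure (μ : Measure H) (m : H) (P : H →L[ℝ] H) : Prop :=
  ∀ l : H, μ.map (fun x => ⟪l, x⟫_ℝ) = gaussianReal ⟪l, m⟫_ℝ (Real.toNNReal ⟪l, P l⟫_ℝ)

/-- A positive operator has finite trace. -/
def HasFiniteTrace (B : H →L[ℝ] H) : Prop :=
  ∃ e : HilbertBasis ℕ ℝ H, Summable (fun i => ⟪B (e i), e i⟫_ℝ)

/-!
Write `Q = S²` with `S = Q^{1/2}`. Since `S` is injective and `H` is infinite-dimensional, the
range of `S` contains an orthonormal sequence `S lᵢ`. Under `μ` the coordinates `Xᵢ = ⟪lᵢ, ·⟫`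
are standard Gaussians with `E[Xᵢ² Xⱼ²] = 1 + 2 δᵢⱼ` (computed from fourth moments by
polarization), so `Tₖ = ∑_{i<k} Xᵢ²` has mean `k` and variance `2k`, and Chebyshev's inequality
shows that `(Tₖ)` is almost surely unbounded. On the other hand, for `x = S y` Bessel's inequality
gives `∑ Xᵢ(x)² = ∑ ⟪S lᵢ, y⟫² ≤ ‖y‖²`.
-/

open Polynomial Filter Set
open scoped NNReal

namespace ProbabilityTheory

/-- Differentiating `t ↦ p(t) exp (v t² / 2)` replaces `p` by `gaussianMomentOp v p`. -/
noncomputable def gaussianMomentOp (v : ℝ) (p : ℝ[X]) : ℝ[X] := derivative p + C v * X * p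

lemma hasDerivAt_eval_mul_exp (v : ℝ) (p : ℝ[X]) (t : ℝ) :
    HasDerivAt (fun t => p.eval t * Real.exp (v * t ^ 2 / 2))
      ((gaussianMomentOp v p).eval t * Real.exp (v * t ^ 2 / 2)) t := by
  have hexp : HasDerivAt (fun t => Real.exp (v * t ^ 2 / 2))
      (Real.exp (v * t ^ 2 / 2) * (v * t)) t := by
    convert (((hasDerivAt_pow 2 t).const_mul v).div_const 2).exp using 1
    ring
  refine ((p.hasDerivAt t).mul hexp).congr_deriv ?_
  simp only [gaussianMomentOp, eval_add, eval_mul, eval_C, eval_X]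
  ring

lemma iteratedDeriv_eval_mul_exp (v : ℝ) (n : ℕ) (p : ℝ[X]) :
    iteratedDeriv n (fun t => p.eval t * Real.exp (v * t ^ 2 / 2))
      = fun t => ((gaussianMomentOp v)^[n] p).eval t * Real.exp (v * t ^ 2 / 2) := by
  induction n generalizing p with
  | zero => rfl
  | succ n ih =>
    rw [iteratedDeriv_succ', funext fun t => (hasDerivAt_eval_mul_exp v p t).deriv, ih,
      Function.iterate_succ_apply]

/-- The moments of `N(0, v)` are the derivatives at `0` of its moment generating function
`exp (v t² / 2)`. -/
lemma integral_pow_gaussianReal (v : ℝ≥0) (n : ℕ) :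
    ∫ x, x ^ n ∂gaussianReal 0 v = ((gaussianMomentOp v)^[n] 1).eval 0 := by
  have h := iteratedDeriv_mgf_zero (X := fun x : ℝ => x) (μ := gaussianReal 0 v) (by simp) n
  have hmgf : mgf (fun x : ℝ => x) (gaussianReal 0 v)
      = fun t => (1 : ℝ[X]).eval t * Real.exp (v * t ^ 2 / 2) := by
    rw [mgf_fun_id_gaussianReal]
    simp only [zero_mul, zero_add, eval_one, one_mul]
  rw [hmgf, iteratedDeriv_eval_mul_exp] at h
  simp only [Pi.pow_apply] at h
  rw [← h]
  simp only [ne_eq, OfNat.ofNat_ne_zero, not_false_eq_true, zero_pow, mul_zero, zero_div,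
    Real.exp_zero, mul_one]

lemma integral_sq_gaussianReal (v : ℝ≥0) : ∫ x, x ^ 2 ∂gaussianReal 0 v = v := by
  rw [integral_pow_gaussianReal]
  simp only [Function.iterate_succ_apply', Function.iterate_zero_apply, gaussianMomentOp,
    derivative_add, derivative_mul, derivative_C, derivative_X, derivative_one, derivative_zero,
    eval_add, eval_mul, eval_C, eval_X, eval_one, eval_zero]
  ring

lemma integral_pow_four_gaussianReal (v : ℝ≥0) :
    ∫ x, x ^ 4 ∂gaussianReal 0 v = 3 * (v : ℝ) ^ 2 := by
  rw [integral_pow_gaussianReal]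
  simp only [Function.iterate_succ_apply', Function.iterate_zero_apply, gaussianMomentOp,
    derivative_add, derivative_mul, derivative_C, derivative_X, derivative_one, derivative_zero,
    eval_add, eval_mul, eval_C, eval_X, eval_one, eval_zero]
  ring

section SumOfSquares

variable {Ω : Type*} [MeasurableSpace Ω] {μ : Measure Ω} {X : ℕ → Ω → ℝ}
  (hX2 : ∀ i, Integrable (fun ω => X i ω ^ 2) μ)
  (hX22 : ∀ i j, Integrable (fun ω => X i ω ^ 2 * X j ω ^ 2) μ)
  (hm2 : ∀ i, ∫ ω, X i ω ^ 2 ∂μ = 1)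
  (hm22 : ∀ i j, ∫ ω, X i ω ^ 2 * X j ω ^ 2 ∂μ = if i = j then 3 else 1)

include hX2 in
lemma integrable_sum_sq (k : ℕ) : Integrable (fun ω => ∑ i ∈ Finset.range k, X i ω ^ 2) μ :=
  integrable_finsetSum _ fun i _ => hX2 i

include hX22 in
lemma integrable_sq_sum_sq (k : ℕ) :
    Integrable (fun ω => (∑ i ∈ Finset.range k, X i ω ^ 2) ^ 2) μ := by
  simp_rw [sq (Finset.sum _ _), Finset.sum_mul_sum]
  exact integrable_finsetSum _ fun i _ => integrable_finsetSum _ fun j _ => hX22 i j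

include hX2 hm2 in
lemma integral_sum_sq (k : ℕ) : ∫ ω, ∑ i ∈ Finset.range k, X i ω ^ 2 ∂μ = k := by
  simp [integral_finsetSum _ fun i _ => hX2 i, hm2]

include hX22 hm22 in
lemma integral_sq_sum_sq (k : ℕ) :
    ∫ ω, (∑ i ∈ Finset.range k, X i ω ^ 2) ^ 2 ∂μ = k ^ 2 + 2 * k := by
  simp_rw [sq (Finset.sum _ _), Finset.sum_mul_sum]
  rw [integral_finsetSum _ fun i _ => integrable_finsetSum _ fun j _ => hX22 i j]
  simp_rw [integral_finsetSum _ fun j _ => hX22 _ j, hm22]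
  have hδ : ∀ i j : ℕ, (if i = j then (3 : ℝ) else 1) = 1 + if i = j then 2 else 0 := by
    intro i j; split_ifs <;> norm_num
  simp_rw [hδ, Finset.sum_add_distrib, Finset.sum_ite_eq, Finset.sum_ite_mem, Finset.inter_self]
  simp only [Finset.sum_const, Finset.card_range, nsmul_eq_mul, mul_one]
  ring

include hX2 hX22 in
lemma integrable_sum_sq_sub_sq [IsFiniteMeasure μ] (k : ℕ) :
    Integrable (fun ω => (∑ i ∈ Finset.range k, X i ω ^ 2 - k) ^ 2) μ := by
  simp_rw [sub_sq]
  exact ((integrable_sq_sum_sq hX22 k).sub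
    (((integrable_sum_sq hX2 k).const_mul 2).mul_const _)).add (integrable_const _)

include hX2 hX22 hm2 hm22 in
lemma integral_sum_sq_sub_sq [IsProbabilityMeasure μ] (k : ℕ) :
    ∫ ω, (∑ i ∈ Finset.range k, X i ω ^ 2 - k) ^ 2 ∂μ = 2 * k := by
  have hlin : Integrable (fun ω => 2 * (∑ i ∈ Finset.range k, X i ω ^ 2) * k) μ :=
    ((integrable_sum_sq hX2 k).const_mul 2).mul_const _
  have hint : Integrable (fun ω => (∑ i ∈ Finset.range k, X i ω ^ 2) ^ 2
      - 2 * (∑ i ∈ Finset.range k, X i ω ^ 2) * k) μ :=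
    (integrable_sq_sum_sq hX22 k).sub hlin
  simp_rw [sub_sq]
  rw [integral_add hint (integrable_const _), integral_sub (integrable_sq_sum_sq hX22 k) hlin,
    integral_mul_const, integral_const_mul, integral_sum_sq hX2 hm2,
    integral_sq_sum_sq hX22 hm22, integral_const, probReal_univ, smul_eq_mul]
  ring

include hX2 hX22 hm2 hm22 in
lemma measureReal_sum_sq_le_le_div [IsProbabilityMeasure μ] {c : ℝ} {k : ℕ} (hk : 0 < k) (hck : 2 * c ≤ k) :
    μ.real {ω | ∑ i ∈ Finset.range k, X i ω ^ 2 ≤ c} ≤ 8 / k := by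
  have hk' : (0 : ℝ) < k := by exact_mod_cast hk
  have hsub : {ω | ∑ i ∈ Finset.range k, X i ω ^ 2 ≤ c}
      ⊆ {ω | (k / 2 : ℝ) ^ 2 ≤ (∑ i ∈ Finset.range k, X i ω ^ 2 - k) ^ 2} := by
    intro ω hω
    have h0 : 0 ≤ ∑ i ∈ Finset.range k, X i ω ^ 2 := Finset.sum_nonneg fun i _ => sq_nonneg _
    simp only [mem_ofPred_eq] at hω ⊢
    nlinarith
  have hmarkov := mul_meas_ge_le_integral_of_nonneg (ae_of_all _ fun ω => sq_nonneg _)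
    (integrable_sum_sq_sub_sq hX2 hX22 k) ((k / 2 : ℝ) ^ 2)
  rw [integral_sum_sq_sub_sq hX2 hX22 hm2 hm22] at hmarkov
  have hbound : (k / 2 : ℝ) ^ 2 * μ.real {ω | ∑ i ∈ Finset.range k, X i ω ^ 2 ≤ c} ≤ 2 * k :=
    (mul_le_mul_of_nonneg_left (measureReal_mono hsub) (sq_nonneg _)).trans hmarkov
  rw [le_div_iff₀ hk']
  nlinarith

include hX2 hX22 hm2 hm22 in
lemma measure_summable_sq_eq_zero [IsProbabilityMeasure μ] : μ {ω | Summable fun i => X i ω ^ 2} = 0 := by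
  have hsub : {ω | Summable fun i => X i ω ^ 2}
      ⊆ ⋃ n : ℕ, ⋂ k : ℕ, {ω | ∑ i ∈ Finset.range k, X i ω ^ 2 ≤ n} := by
    intro ω hω
    simp only [mem_iUnion, mem_iInter, mem_ofPred_eq]
    exact ⟨⌈∑' i, X i ω ^ 2⌉₊, fun k =>
      (hω.sum_le_tsum _ fun i _ => sq_nonneg _).trans (Nat.le_ceil _)⟩
  refine measure_mono_null hsub (measure_iUnion_null fun n => ?_)
  rw [← measureReal_eq_zero_iff]
  refine le_antisymm (ge_of_tendsto (tendsto_const_div_atTop_nhds_zero_nat 8) ?_)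
    measureReal_nonneg
  filter_upwards [eventually_ge_atTop (2 * n + 1)] with k hk
  refine (measureReal_mono (iInter_subset _ k)).trans
    (measureReal_sum_sq_le_le_div hX2 hX22 hm2 hm22 (by omega) ?_)
  exact_mod_cast (by omega : 2 * n ≤ k)

end SumOfSquares

end ProbabilityTheory

lemma inner_sq_mul_inner_sq_eq {E : Type*} [NormedAddCommGroup E] [InnerProductSpace ℝ E]
    (u w x : E) :
    ⟪u, x⟫_ℝ ^ 2 * ⟪w, x⟫_ℝ ^ 2 = (⟪u + w, x⟫_ℝ ^ 4 + ⟪u - w, x⟫_ℝ ^ 4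
      - 2 * ⟪u, x⟫_ℝ ^ 4 - 2 * ⟪w, x⟫_ℝ ^ 4) / 12 := by
  rw [inner_add_left, inner_sub_left]
  ring

section GaussianMeasure

variable {E : Type*} [NormedAddCommGroup E] [InnerProductSpace ℝ E] [MeasurableSpace E]
  [OpensMeasurableSpace E] {μ : Measure E} {m : E} {P : E →L[ℝ] E}

lemma IsGaussianMeasure.integrable_inner_pow (hG : IsGaussianMeasure μ m P) (l : E) (n : ℕ) :
    Integrable (fun x => ⟪l, x⟫_ℝ ^ n) μ := by
  have h := integrable_pow_of_mem_interior_integrableExpSet (X := fun y : ℝ => y)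
    (μ := gaussianReal ⟪l, m⟫_ℝ (Real.toNNReal ⟪l, P l⟫_ℝ)) (by simp) n
  rw [← hG l] at h
  exact (integrable_map_measure (continuous_pow n).aestronglyMeasurable (by fun_prop)).mp h

lemma IsGaussianMeasure.integral_inner_pow (hG : IsGaussianMeasure μ 0 P) (l : E) (n : ℕ) :
    ∫ x, ⟪l, x⟫_ℝ ^ n ∂μ = ∫ y, y ^ n ∂gaussianReal 0 (Real.toNNReal ⟪l, P l⟫_ℝ) := by
  have h := hG l
  rw [inner_zero_right] at h
  rw [← h, integral_map (by fun_prop) (continuous_pow n).aestronglyMeasurable]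

lemma IsGaussianMeasure.integral_inner_sq (hG : IsGaussianMeasure μ 0 P) {l : E}
    (hl : 0 ≤ ⟪l, P l⟫_ℝ) : ∫ x, ⟪l, x⟫_ℝ ^ 2 ∂μ = ⟪l, P l⟫_ℝ := by
  rw [hG.integral_inner_pow, integral_sq_gaussianReal, Real.coe_toNNReal _ hl]

lemma IsGaussianMeasure.integral_inner_pow_four (hG : IsGaussianMeasure μ 0 P) {l : E}
    (hl : 0 ≤ ⟪l, P l⟫_ℝ) : ∫ x, ⟪l, x⟫_ℝ ^ 4 ∂μ = 3 * ⟪l, P l⟫_ℝ ^ 2 := by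
  rw [hG.integral_inner_pow, integral_pow_four_gaussianReal, Real.coe_toNNReal _ hl]

lemma IsGaussianMeasure.integrable_inner_sq_mul_inner_sq (hG : IsGaussianMeasure μ m P)
    (u w : E) : Integrable (fun x => ⟪u, x⟫_ℝ ^ 2 * ⟪w, x⟫_ℝ ^ 2) μ := by
  simp_rw [inner_sq_mul_inner_sq_eq u w]
  exact ((((hG.integrable_inner_pow _ 4).add (hG.integrable_inner_pow _ 4)).sub
    ((hG.integrable_inner_pow u 4).const_mul 2)).sub
    ((hG.integrable_inner_pow w 4).const_mul 2)).div_const 12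

lemma IsGaussianMeasure.integral_inner_sq_mul_inner_sq (hG : IsGaussianMeasure μ 0 P)
    (hP : ∀ u, 0 ≤ ⟪u, P u⟫_ℝ) (u w : E) :
    ∫ x, ⟪u, x⟫_ℝ ^ 2 * ⟪w, x⟫_ℝ ^ 2 ∂μ = (⟪u + w, P (u + w)⟫_ℝ ^ 2
      + ⟪u - w, P (u - w)⟫_ℝ ^ 2 - 2 * ⟪u, P u⟫_ℝ ^ 2 - 2 * ⟪w, P w⟫_ℝ ^ 2) / 4 := by
  have h4 := fun v => hG.integrable_inner_pow v 4
  have hA : Integrable (fun x => ⟪u + w, x⟫_ℝ ^ 4 + ⟪u - w, x⟫_ℝ ^ 4) μ := (h4 _).add (h4 _)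
  have hB : Integrable (fun x => ⟪u + w, x⟫_ℝ ^ 4 + ⟪u - w, x⟫_ℝ ^ 4 - 2 * ⟪u, x⟫_ℝ ^ 4) μ :=
    hA.sub ((h4 u).const_mul 2)
  simp_rw [inner_sq_mul_inner_sq_eq u w]
  rw [integral_div, integral_sub hB ((h4 w).const_mul 2), integral_sub hA ((h4 u).const_mul 2),
    integral_add (h4 _) (h4 _), integral_const_mul, integral_const_mul,
    hG.integral_inner_pow_four (hP _), hG.integral_inner_pow_four (hP _),
    hG.integral_inner_pow_four (hP _), hG.integral_inner_pow_four (hP _)]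
  ring

theorem IsGaussianMeasure.measure_summable_inner_sq_eq_zero [IsProbabilityMeasure μ]
    (hG : IsGaussianMeasure μ 0 P) {F : Type*} [NormedAddCommGroup F] [InnerProductSpace ℝ F]
    (T : E →ₗ[ℝ] F) (hPT : ∀ u, ⟪u, P u⟫_ℝ = ‖T u‖ ^ 2) {l : ℕ → E}
    (hl : Orthonormal ℝ (T ∘ l)) : μ {x | Summable fun i => ⟪l i, x⟫_ℝ ^ 2} = 0 := by
  have hP : ∀ u, 0 ≤ ⟪u, P u⟫_ℝ := fun u => by rw [hPT]; positivity
  have hTl : ∀ i, ‖T (l i)‖ = 1 := hl.1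
  refine measure_summable_sq_eq_zero (X := fun i x => ⟪l i, x⟫_ℝ)
    (fun i => hG.integrable_inner_pow _ 2) (fun i j => hG.integrable_inner_sq_mul_inner_sq _ _)
    (fun i => ?_) (fun i j => ?_)
  · rw [hG.integral_inner_sq (hP _), hPT, hTl, one_pow]
  · have hij : ⟪T (l i), T (l j)⟫_ℝ = if i = j then 1 else 0 := orthonormal_iff_ite.mp hl i j
    rw [hG.integral_inner_sq_mul_inner_sq hP, hPT, hPT, hPT, hPT, map_add, map_sub,
      norm_add_sq_real, norm_sub_sq_real, hTl, hTl, hij]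
    split_ifs <;> norm_num

end GaussianMeasure

lemma exists_linearIndependent_nat {K V : Type*} [DivisionRing K] [AddCommGroup V] [Module K V]
    (hV : ¬ Module.Finite K V) : ∃ v : ℕ → V, LinearIndependent K v := by
  have hinf : (Module.Basis.ofVectorSpaceIndex K V).Infinite := fun hfin =>
    hV (haveI := hfin.fintype; Module.Finite.of_basis (Module.Basis.ofVectorSpace K V))
  exact ⟨_, (Module.Basis.ofVectorSpace K V).linearIndependent.comp _
    hinf.natEmbedding.injective⟩

lemma exists_orthonormal_comp_of_injective {𝕜 E F : Type*} [RCLike 𝕜] [AddCommGroup E]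
    [Module 𝕜 E] [NormedAddCommGroup F] [InnerProductSpace 𝕜 F] (T : E →ₗ[𝕜] F)
    (hT : Function.Injective T) (hE : ¬ FiniteDimensional 𝕜 E) :
    ∃ l : ℕ → E, Orthonormal 𝕜 (T ∘ l) := by
  obtain ⟨v, hv⟩ := exists_linearIndependent_nat hE
  have hTv : LinearIndependent 𝕜 (T ∘ v) := hv.map' T (LinearMap.ker_eq_bot.mpr hT)
  have hrange : ∀ n, InnerProductSpace.gramSchmidtNormed 𝕜 (T ∘ v) n ∈ LinearMap.range T := by
    intro n
    refine Submodule.smul_mem _ _ ?_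
    refine Submodule.span_le.mpr ?_ (InnerProductSpace.gramSchmidt_mem_span 𝕜 (T ∘ v) le_rfl)
    rintro _ ⟨i, -, rfl⟩
    exact ⟨v i, rfl⟩
  choose l hl using hrange
  refine ⟨l, ?_⟩
  rw [show T ∘ l = _ from funext hl]
  exact InnerProductSpace.gramSchmidtNormed_orthonormal hTv

theorem stmt6_general (hinf : ¬ FiniteDimensional ℝ H)
    (μ : Measure H) [IsProbabilityMeasure μ]
    (Q SQ : H →L[ℝ] H)
    (hQinj : Function.Injective Q)
    (hSQsa : IsSelfAdjoint SQ) (hSQ : SQ ∘L SQ = Q)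
    (hG : IsGaussianMeasure μ 0 Q) :
    μ (Set.range SQ) = 0 := by
  have hSQinj : Function.Injective SQ := by
    rw [← hSQ, ContinuousLinearMap.coe_comp] at hQinj
    exact hQinj.of_comp
  have hsymm : ∀ u w, ⟪SQ u, w⟫_ℝ = ⟪u, SQ w⟫_ℝ := hSQsa.isSymmetric
  have hQ : ∀ u, ⟪u, Q u⟫_ℝ = ‖SQ u‖ ^ 2 := fun u => by
    rw [← hSQ, ContinuousLinearMap.comp_apply, ← hsymm, real_inner_self_eq_norm_sq]
  obtain ⟨l, hl⟩ := exists_orthonormal_comp_of_injective (SQ : H →ₗ[ℝ] H) hSQinj hinf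
  refine measure_mono_null ?_ (hG.measure_summable_inner_sq_eq_zero _ hQ hl)
  rintro _ ⟨y, rfl⟩
  simpa [← hsymm, Real.norm_eq_abs, sq_abs] using hl.inner_products_summable (x := y)

theorem stmt6 [TopologicalSpace.SeparableSpace H] (hinf : ¬ FiniteDimensional ℝ H)
    (μ : Measure H) [IsProbabilityMeasure μ]
    (Q SQ : H →L[ℝ] H)
    (hQsa : IsSelfAdjoint Q) (hQpos : ∀ u, 0 ≤ ⟪Q u, u⟫_ℝ) (hQtr : HasFiniteTrace Q)
    (hQinj : Function.Injective Q)
    (hSQsa : IsSelfAdjoint SQ) (hSQpos : ∀ u, 0 ≤ ⟪SQ u, u⟫_ℝ) (hSQ : SQ ∘L SQ = Q)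
    (hG : IsGaussianMeasure μ 0 Q) :
    μ (Set.range SQ) = 0 :=
  stmt6_general hinf μ Q SQ hQinj hSQsa hSQ hG
end

section
/- Let (p_i) and (r_i) be sequences of positive reals with ∑ p_i < ∞ and inf_i r_i = 0. Then there exists y = (y_i) ∈ ℓ² with ∑ y_i² ≤ 1 such that ∑_{i=1}^∞ y_i²/(r_i + p_i) = ∞ or ∑_{i=1}^∞ log(1 + p_i/r_i) = ∞. -/
/-!
Pick a subsequence `φ` with `r (φ k) < 2⁻ᵏ / 2` and put `y (φ k) = √(r (φ k))`, `y = 0` elsewhere,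
so that `∑ y i ^ 2 ≤ 1`. If `∑ log (1 + p i / r i)` converges, then `p i / r i → 0`, so the terms
`y (φ k) ^ 2 / (r (φ k) + p (φ k)) = (1 + p (φ k) / r (φ k))⁻¹` tend to `1` and the other series
diverges.
-/

open Filter Function Topology

lemma frequently_lt_of_ciInf_eq {r : ℕ → ℝ} {a b : ℝ} (hr : ∀ i, a < r i) (hinf : ⨅ i, r i = a)
    (hab : a < b) : ∃ᶠ i in atTop, r i < b := by
  refine frequently_atTop.2 fun N => ?_
  set δ := min b ((Finset.range (N + 1)).inf' Finset.nonempty_range_add_one r)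
  have haδ : a < δ := lt_min hab ((Finset.lt_inf'_iff _).2 fun i _ => hr i)
  obtain ⟨j, hj⟩ := exists_lt_of_ciInf_lt (hinf ▸ haδ : ⨅ i, r i < δ)
  refine ⟨j, not_lt.1 fun hjN => ?_, hj.trans_le (min_le_left _ _)⟩
  exact hj.not_ge ((min_le_right _ _).trans (Finset.inf'_le _ (Finset.mem_range.2 (by omega))))

lemma exists_strictMono_lt_half_div_two_pow {r : ℕ → ℝ} (hr : ∀ i, 0 < r i)
    (hinf : ⨅ i, r i = 0) : ∃ φ : ℕ → ℕ, StrictMono φ ∧ ∀ k, r (φ k) < 1 / 2 / 2 ^ k :=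
  extraction_forall_of_frequently fun _ => frequently_lt_of_ciInf_eq hr hinf (by positivity)

lemma sq_extend_sqrt {α β : Type*} {φ : α → β} (a : α → ℝ) (ha : ∀ k, 0 ≤ a k) :
    (fun i => extend φ (fun k => √(a k)) 0 i ^ 2) = extend φ a 0 := by
  ext i
  rw [apply_extend (· ^ 2)]
  congr 1
  · ext k; exact Real.sq_sqrt (ha k)
  · ext; simp

lemma Real.tendsto_cofinite_one_of_summable_log {ι : Type*} {x : ι → ℝ} (hx : ∀ i, 0 < x i)
    (h : Summable fun i => Real.log (x i)) : Tendsto x cofinite (𝓝 1) := by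
  simpa [comp_def, Real.exp_log (hx _)] using
    (Real.continuous_exp.tendsto 0).comp h.tendsto_cofinite_zero

theorem stmt11_general (p r : ℕ → ℝ)
    (hp : ∀ i, 0 < p i) (hrpos : ∀ i, 0 < r i)
    (hinf : ⨅ i, r i = 0) :
    ∃ y : ℕ → ℝ, Summable (fun i => y i ^ 2) ∧ ∑' i, y i ^ 2 ≤ 1 ∧
      (¬ Summable (fun i => y i ^ 2 / (r i + p i)) ∨
        ¬ Summable (fun i => Real.log (1 + p i / r i))) := by
  by_cases hlog : Summable (fun i => Real.log (1 + p i / r i))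
  swap
  · exact ⟨0, by simp [summable_zero], by simp, Or.inr hlog⟩
  obtain ⟨φ, hφ, hrφ⟩ := exists_strictMono_lt_half_div_two_pow hrpos hinf
  set y := extend φ (fun k => √(r (φ k))) 0
  have hy : (fun i => y i ^ 2) = extend φ (r ∘ φ) 0 :=
    sq_extend_sqrt _ fun k => (hrpos (φ k)).le
  have hsum : Summable (r ∘ φ) :=
    (summable_geometric_two' 1).of_nonneg_of_le (fun k => (hrpos _).le) fun k => (hrφ k).le
  refine ⟨y, ?_, ?_, Or.inl fun hs => ?_⟩
  · rwa [hy, summable_extend_zero hφ.injective]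
  · rw [hy, tsum_extend_zero hφ.injective, ← tsum_geometric_two' 1]
    exact hsum.tsum_le_tsum (fun k => (hrφ k).le) (summable_geometric_two' 1)
  · have hterm k : y (φ k) ^ 2 / (r (φ k) + p (φ k)) = (1 + p (φ k) / r (φ k))⁻¹ := by
      rw [congrFun hy, hφ.injective.extend_apply, comp_apply]
      have := hrpos (φ k); have := hp (φ k)
      field_simp
    have hterm_tendsto : Tendsto (fun k => y (φ k) ^ 2 / (r (φ k) + p (φ k))) cofinite (𝓝 1) := by
      simp_rw [hterm]
      simpa using ((Real.tendsto_cofinite_one_of_summable_log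
        (fun i => by have := hp i; have := hrpos i; positivity) hlog).comp
          hφ.injective.tendsto_cofinite).inv₀ one_ne_zero
    exact one_ne_zero (tendsto_nhds_unique hterm_tendsto
      (hs.comp_injective hφ.injective).tendsto_cofinite_zero)

theorem stmt11 (p r : ℕ → ℝ)
    (hp : ∀ i, 0 < p i) (hrpos : ∀ i, 0 < r i)
    (hps : Summable p) (hinf : ⨅ i, r i = 0) :
    ∃ y : ℕ → ℝ, Summable (fun i => y i ^ 2) ∧ ∑' i, y i ^ 2 ≤ 1 ∧
      (¬ Summable (fun i => y i ^ 2 / (r i + p i)) ∨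
        ¬ Summable (fun i => Real.log (1 + p i / r i))) :=
  stmt11_general p r hp hrpos hinf
end

section
/- Let H be an infinite-dimensional separable Hilbert space, μ^f = N(m^f, P^f) a Gaussian probability measure with trace-class covariance P^f, and R a bounded symmetric positive semidefinite operator that commutes with P^f. Define the data likelihood d(y|x) = exp(-½|y - x|²_{R⁻¹}) with the convention |z|²_{R⁻¹} = ∞ for z outside the range of R^{1/2}. Then ∫_H d(y|x) dμ^f(x) > 0 for all y ∈ H if and only if R has positive lower bound. -/
/-!
Write `S = R^{1/2}`. The integrand `x ↦ expNeg (qform S (y - x) / 2)` vanishes off the coset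
`y - range S`. If `S` is not onto, pick `y₀ ∉ range S`: the cosets `t • y₀ - range S`, `t : ℝ`,
are pairwise disjoint, so only countably many of them carry positive mass, and the integral
vanishes at some `y = t • y₀`. If `S` is onto, it is injective too (`ker S = (range S)ᗮ`), hence
an isomorphism, and the integrand is continuous and positive everywhere. Finally, a self-adjoint
`S` is onto iff it is bounded below, and `‖S u‖² = ⟪R u, u⟫`.
-/

open MeasureTheory ProbabilityTheory ENNReal
open scoped InnerProductSpace

variable {H : Type*} [NormedAddCommGroup H] [InnerProductSpace ℝ H] [CompleteSpace H]
  [MeasurableSpace H] [BorelSpace H]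

/-- Extended quadratic form `|x|²_{A⁻¹}` associated to the square root `S = A^{1/2}`. -/
noncomputable def qform (S : H →L[ℝ] H) (x : H) : ℝ≥0∞ :=
  ⨅ u ∈ {u : H | S u = x}, ENNReal.ofReal (‖u‖ ^ 2)

/-- `exp(-t)` for `t ∈ [0,∞]`, with the convention `exp(-∞) = 0`. -/
noncomputable def expNeg (t : ℝ≥0∞) : ℝ :=
  if t = ⊤ then 0 else Real.exp (-t.toReal)

open Function

lemma expNeg_eq_zero_iff {t : ℝ≥0∞} : expNeg t = 0 ↔ t = ⊤ := by
  by_cases ht : t = ⊤ <;> simp [expNeg, ht, Real.exp_ne_zero]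

lemma expNeg_ofReal {r : ℝ} (hr : 0 ≤ r) : expNeg (ENNReal.ofReal r) = Real.exp (-r) := by
  simp [expNeg, ENNReal.toReal_ofReal hr]

section QuadraticForm

variable {E : Type*} [NormedAddCommGroup E] [InnerProductSpace ℝ E] {S : E →L[ℝ] E}

lemma qform_apply_le (u : E) : qform S (S u) ≤ ENNReal.ofReal (‖u‖ ^ 2) :=
  iInf₂_le (f := fun v (_ : v ∈ {v | S v = S u}) => ENNReal.ofReal (‖v‖ ^ 2)) u rfl

lemma qform_eq_top_iff {z : E} : qform S z = ⊤ ↔ z ∉ Set.range S := by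
  constructor
  · rintro hz ⟨u, rfl⟩
    exact ENNReal.ofReal_ne_top (top_le_iff.mp (hz ▸ qform_apply_le u))
  · intro hz
    exact iInf₂_eq_top.mpr fun u hu => absurd ⟨u, hu⟩ hz

lemma qform_apply_of_injective (hS : Injective S) (u : E) :
    qform S (S u) = ENNReal.ofReal (‖u‖ ^ 2) :=
  le_antisymm (qform_apply_le u) (le_iInf₂ fun v hv => by rw [hS hv])

lemma support_expNeg_qform_half_subset_range :
    support (fun z => expNeg (qform S z / 2)) ⊆ (S.range : Set E) := by
  intro z hz
  by_contra hzS
  have : qform S z = ⊤ := qform_eq_top_iff.mpr (by simpa using hzS)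
  simp [this, expNeg_eq_zero_iff, ENNReal.top_div] at hz

end QuadraticForm

lemma exists_integral_eq_zero_of_pairwise_disjoint_support {α ι : Type*} [MeasurableSpace α]
    [Uncountable ι] (μ : Measure α) [SFinite μ] (f : ι → α → ℝ)
    (hf : Pairwise (Disjoint on fun i => support (f i))) :
    ∃ i, ∫ x, f i x ∂μ = 0 := by
  by_contra! h
  have hmeas : ∀ i, NullMeasurableSet (support (f i)) μ := fun i =>
    (Integrable.of_integral_ne_zero (h i)).aemeasurable.nullMeasurable
      (measurableSet_singleton 0).compl
  have hpos : ∀ i, 0 < μ (support (f i)) := fun i =>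
    pos_iff_ne_zero.mpr (frequently_ae_iff.mp (frequently_ae_ne_zero_of_integral_ne_zero (h i)))
  have hcount := Measure.countable_meas_pos_of_disjoint_iUnion₀ hmeas
    fun i j hij => (hf hij).aedisjoint
  simp only [hpos, Set.ofPred_true, Set.countable_univ_iff] at hcount
  exact not_countable hcount

lemma Submodule.eq_top_of_forall_integral_comp_sub_ne_zero {E : Type*} [AddCommGroup E]
    [Module ℝ E] [MeasurableSpace E] (μ : Measure E) [SFinite μ] (V : Submodule ℝ E) {g : E → ℝ}
    (hg : support g ⊆ V) (h : ∀ y, ∫ x, g (y - x) ∂μ ≠ 0) : V = ⊤ := by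
  by_contra hV
  obtain ⟨y₀, hy₀⟩ := SetLike.exists_not_mem_of_ne_top V hV
  suffices hdisj : Pairwise (Disjoint on fun t : ℝ => support fun x => g (t • y₀ - x)) by
    obtain ⟨t, ht⟩ := exists_integral_eq_zero_of_pairwise_disjoint_support μ _ hdisj
    exact h _ ht
  intro t s hts
  refine Set.disjoint_left.mpr fun x hxt hxs => hy₀ ?_
  have : (t - s) • y₀ ∈ V := by
    simpa [sub_smul] using V.sub_mem (hg hxt) (hg hxs)
  exact (V.smul_mem_iff (sub_ne_zero.mpr hts)).mp this

section Operator

variable {E : Type*} [NormedAddCommGroup E] [InnerProductSpace ℝ E]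

lemma ContinuousLinearMap.exists_antilipschitzWith_iff_exists_mul_norm_sq_le {F : Type*}
    [NormedAddCommGroup F] [NormedSpace ℝ F] (f : E →L[ℝ] F) :
    (∃ K, AntilipschitzWith K f) ↔ ∃ α > 0, ∀ u, α * ‖u‖ ^ 2 ≤ ‖f u‖ ^ 2 := by
  constructor
  · rintro ⟨K, hK⟩
    refine ⟨((K + 1) ^ 2)⁻¹, by positivity, fun u => ?_⟩
    have hu : ‖u‖ ≤ (K + 1) * ‖f u‖ := by
      nlinarith [f.bound_of_antilipschitz hK u, norm_nonneg (f u)]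
    rw [inv_mul_le_iff₀ (by positivity), ← mul_pow]
    exact pow_le_pow_left₀ (norm_nonneg u) hu 2
  · rintro ⟨α, hα, h⟩
    refine ⟨⟨(√α)⁻¹, by positivity⟩, f.antilipschitz_of_bound fun u => ?_⟩
    change ‖u‖ ≤ (√α)⁻¹ * ‖f u‖
    have hsq : (√α * ‖u‖) ^ 2 ≤ ‖f u‖ ^ 2 := by rw [mul_pow, Real.sq_sqrt hα.le]; exact h u
    rw [inv_mul_eq_div, le_div_iff₀ (by positivity), mul_comm]
    exact (pow_le_pow_iff_left₀ (by positivity) (norm_nonneg _) two_ne_zero).mp hsq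

namespace IsSelfAdjoint

variable [CompleteSpace E] {S : E →L[ℝ] E}

lemma ker_eq_orthogonal_range (hS : IsSelfAdjoint S) : S.ker = S.rangeᗮ :=
  hS.isSymmetric.orthogonal_range.symm

lemma injective_of_surjective (hS : IsSelfAdjoint S) (h : Surjective S) : Injective S := by
  refine (LinearMap.ker_eq_bot (f := (S : E →ₗ[ℝ] E))).mp ?_
  rw [hS.ker_eq_orthogonal_range, LinearMap.range_eq_top.mpr h, Submodule.top_orthogonal_eq_bot]

lemma surjective_iff_exists_antilipschitzWith (hS : IsSelfAdjoint S) :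
    Surjective S ↔ ∃ K, AntilipschitzWith K S := by
  constructor
  · intro h
    exact (S.bijective_iff_dense_range_and_antilipschitz.mp ⟨hS.injective_of_surjective h, h⟩).2
  · rintro ⟨K, hK⟩
    refine (S.bijective_iff_dense_range_and_antilipschitz.mpr ⟨?_, K, hK⟩).2
    rw [Submodule.topologicalClosure_eq_top_iff, ← hS.ker_eq_orthogonal_range,
      LinearMap.ker_eq_bot]
    exact hK.injective

lemma inner_comp_self_apply (hS : IsSelfAdjoint S) (u : E) : ⟪(S ∘L S) u, u⟫_ℝ = ‖S u‖ ^ 2 := by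
  simpa [hS.adjoint_eq] using (S.apply_norm_sq_eq_inner_adjoint_left u).symm

end IsSelfAdjoint

end Operator

lemma integral_expNeg_qform_half_pos {E : Type*} [NormedAddCommGroup E] [InnerProductSpace ℝ E]
    [CompleteSpace E] [MeasurableSpace E] [OpensMeasurableSpace E] {S : E →L[ℝ] E}
    (hS : Bijective S) (μ : Measure E) [IsFiniteMeasure μ] [NeZero μ] (y : E) :
    0 < ∫ x, expNeg (qform S (y - x) / 2) ∂μ := by
  let e := ContinuousLinearEquiv.ofBijective S (LinearMap.ker_eq_bot.mpr hS.1)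
    (LinearMap.range_eq_top.mpr hS.2)
  have he : ∀ z, expNeg (qform S z / 2) = Real.exp (-(‖e.symm z‖ ^ 2 / 2)) := fun z => by
    obtain ⟨u, rfl⟩ : ∃ u, S u = z := ⟨e.symm z, e.apply_symm_apply z⟩
    rw [show e.symm (S u) = u from e.symm_apply_apply u, qform_apply_of_injective hS.1,
      ← ENNReal.ofReal_ofNat 2, ← ENNReal.ofReal_div_of_pos two_pos, expNeg_ofReal (by positivity)]
  have hcont : Continuous fun x => Real.exp (-(‖e.symm (y - x)‖ ^ 2 / 2)) := by
    have := e.symm.continuous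
    fun_prop
  simp_rw [he]
  refine integral_exp_pos <|
    Integrable.of_bound hcont.aestronglyMeasurable 1 (ae_of_all _ fun x => ?_)
  rw [Real.norm_eq_abs, abs_of_pos (Real.exp_pos _), Real.exp_le_one_iff]
  have := sq_nonneg ‖e.symm (y - x)‖
  linarith

theorem stmt13_general (μf : Measure H) [IsProbabilityMeasure μf] (R SR : H →L[ℝ] H)
    (hSRsa : IsSelfAdjoint SR) (hSR : SR ∘L SR = R) :
    (∀ y : H, 0 < ∫ x, expNeg (qform SR (y - x) / 2) ∂μf) ↔
      ∃ α > 0, ∀ u : H, α * ‖u‖ ^ 2 ≤ ⟪R u, u⟫_ℝ := by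
  simp_rw [← hSR, hSRsa.inner_comp_self_apply,
    ← SR.exists_antilipschitzWith_iff_exists_mul_norm_sq_le,
    ← hSRsa.surjective_iff_exists_antilipschitzWith]
  refine ⟨fun h => ?_, fun h y =>
    integral_expNeg_qform_half_pos ⟨hSRsa.injective_of_surjective h, h⟩ μf y⟩
  have hrange := SR.range.eq_top_of_forall_integral_comp_sub_ne_zero μf
    support_expNeg_qform_half_subset_range fun y => (h y).ne'
  exact LinearMap.range_eq_top.mp hrange

theorem stmt13 [TopologicalSpace.SeparableSpace H] (hinf : ¬ FiniteDimensional ℝ H)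
    (μf : Measure H) [IsProbabilityMeasure μf]
    (mf : H) (Pf R SR : H →L[ℝ] H)
    (hPfsa : IsSelfAdjoint Pf) (hPfpos : ∀ u, 0 ≤ ⟪Pf u, u⟫_ℝ) (hPftr : HasFiniteTrace Pf)
    (hG : IsGaussianMeasure μf mf Pf)
    (hRsa : IsSelfAdjoint R) (hRpos : ∀ u, 0 ≤ ⟪R u, u⟫_ℝ)
    (hSRsa : IsSelfAdjoint SR) (hSRpos : ∀ u, 0 ≤ ⟪SR u, u⟫_ℝ) (hSR : SR ∘L SR = R)
    (hcomm : Pf ∘L R = R ∘L Pf) :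
    (∀ y : H, 0 < ∫ x, expNeg (qform SR (y - x) / 2) ∂μf) ↔
      ∃ α > 0, ∀ u : H, α * ‖u‖ ^ 2 ≤ ⟪R u, u⟫_ℝ :=
  stmt13_general μf R SR hSRsa hSR
end

section
/- Let H be a separable Hilbert space with orthonormal basis (e_i), μ^f = N(m^f, P^f) Gaussian with P^f e_i = p_i e_i (p_i > 0, ∑ p_i < ∞), and R a commuting bounded symmetric positive semidefinite operator with R e_i = r_i e_i, r_i > 0. If inf_i r_i = 0, then the set A = { y ∈ H : ∫_H exp(-½|y - x|²_{R⁻¹}) dμ^f(x) = 0 } is dense in H. -/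
open MeasureTheory ProbabilityTheory ENNReal
open scoped InnerProductSpace

variable {H : Type*} [NormedAddCommGroup H] [InnerProductSpace ℝ H] [CompleteSpace H]
  [MeasurableSpace H] [BorelSpace H]

/-- Diagonal extended quadratic form `|z|²_{R⁻¹} = ∑ ⟪z,eᵢ⟫²/rᵢ ∈ [0,∞]`. -/
noncomputable def qformDiag (e : HilbertBasis ℕ ℝ H) (r : ℕ → ℝ) (z : H) : ℝ≥0∞ :=
  ∑' i, ENNReal.ofReal (⟪z, e i⟫_ℝ ^ 2 / r i)

/-!
Keeping only the `i`-th term of `|y - x|²_{R⁻¹}` bounds the integral by the one-dimensional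
Gaussian integral `∫ exp(-(aᵢ - t)²/(2rᵢ)) dN(mᵢ, pᵢ)(t)`, where `aᵢ` and `mᵢ` are the `i`-th
coordinates of `y` and of the mean. Splitting according to whether `t` is nearer to `aᵢ` or to `mᵢ`
shows that this is at most `exp(-ρ/8) + √(8/ρ)` once `(aᵢ - mᵢ)² ≥ ρ rᵢ`. Hence the integral
vanishes as soon as the ratios `(aᵢ - mᵢ)²/rᵢ` are unbounded, and such `y` are dense: `rᵢ → 0`
along a subsequence, and shifting the coordinates of `z` there by `±2ᵏ √rᵢₖ` costs arbitrarily
little in norm.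
-/

open Real Filter Topology
open scoped NNReal

lemma expNeg_nonneg (t : ℝ≥0∞) : 0 ≤ expNeg t := by
  unfold expNeg
  split_ifs <;> positivity

lemma expNeg_antitone : Antitone expNeg := by
  intro s t h
  unfold expNeg
  split_ifs with ht hs hs
  · exact le_rfl
  · positivity
  · exact absurd (top_le_iff.mp (hs ▸ h)) ht
  · exact exp_le_exp.mpr (neg_le_neg (ENNReal.toReal_mono ht h))

lemma expNeg_ofReal_s15 {a : ℝ} (ha : 0 ≤ a) : expNeg (ENNReal.ofReal a) = exp (-a) := by
  rw [expNeg, if_neg ENNReal.ofReal_ne_top, ENNReal.toReal_ofReal ha]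

lemma sqrt_mul_exp_neg_le_one {w : ℝ} (hw : 0 ≤ w) : √w * exp (-w) ≤ 1 := by
  have hsqrt : √w ≤ exp w := by
    nlinarith [sq_sqrt hw, sqrt_nonneg w, add_one_le_exp w]
  calc √w * exp (-w) ≤ exp w * exp (-w) := by gcongr
    _ = 1 := by rw [← exp_add, add_neg_cancel, exp_zero]

lemma integral_exp_neg_sq_sub_div (a r : ℝ) :
    ∫ t, exp (-((a - t) ^ 2 / (2 * r))) = √(2 * π * r) := by
  have h := integral_sub_left_eq_self (fun u : ℝ ↦ exp (-(2 * r)⁻¹ * u ^ 2)) volume a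
  simp only [integral_gaussian, div_inv_eq_mul] at h
  rw [show 2 * π * r = π * (2 * r) by ring, ← h]
  congr 1 with t
  field_simp

lemma integrable_exp_neg_sq_sub_div (a : ℝ) {r : ℝ} (hr : 0 < r) :
    Integrable fun t ↦ exp (-((a - t) ^ 2 / (2 * r))) := by
  convert (integrable_exp_neg_mul_sq (inv_pos.mpr (mul_pos two_pos hr))).comp_sub_left a
    using 2 with t
  field_simp

/-- Either `|a - t|` or `|t - m|` is at least `|a - m| / 2`; in the first case the kernel is
small, in the second the density is. -/
lemma gaussianPDFReal_mul_exp_neg_sq_le (m a t : ℝ) {v : ℝ≥0} (hv : v ≠ 0) {r : ℝ} (hr : 0 < r) :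
    gaussianPDFReal m v t * exp (-((a - t) ^ 2 / (2 * r))) ≤
      exp (-((a - m) ^ 2 / (8 * r))) * gaussianPDFReal m v t +
        (√(2 * π * v))⁻¹ * exp (-((a - m) ^ 2 / (8 * v))) * exp (-((a - t) ^ 2 / (2 * r))) := by
  have hv' : (0 : ℝ) < v := by positivity
  have hpdf := gaussianPDFReal_nonneg m v t
  have hsplit : (a - m) ^ 2 ≤ 4 * (a - t) ^ 2 ∨ (a - m) ^ 2 ≤ 4 * (t - m) ^ 2 := by
    rcases le_total ((a - t) ^ 2) ((t - m) ^ 2) with h | h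
    · right; nlinarith [sq_nonneg (a - t - (t - m))]
    · left; nlinarith [sq_nonneg (a - t - (t - m))]
  rcases hsplit with h | h
  · have hker : exp (-((a - t) ^ 2 / (2 * r))) ≤ exp (-((a - m) ^ 2 / (8 * r))) := by
      refine exp_le_exp.mpr (neg_le_neg ?_)
      rw [div_le_div_iff₀ (by positivity) (by positivity)]
      nlinarith
    have hmul := mul_le_mul_of_nonneg_left hker hpdf
    have hrest : 0 ≤ (√(2 * π * v))⁻¹ * exp (-((a - m) ^ 2 / (8 * v))) *
      exp (-((a - t) ^ 2 / (2 * r))) := by positivity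
    linarith
  · have hdens : gaussianPDFReal m v t ≤ (√(2 * π * v))⁻¹ * exp (-((a - m) ^ 2 / (8 * v))) := by
      refine mul_le_mul_of_nonneg_left (exp_le_exp.mpr ?_) (by positivity)
      rw [neg_div, neg_le_neg_iff, div_le_div_iff₀ (by positivity) (by positivity)]
      nlinarith
    have hmul := mul_le_mul_of_nonneg_right hdens (exp_pos (-((a - t) ^ 2 / (2 * r)))).le
    have hrest : 0 ≤ exp (-((a - m) ^ 2 / (8 * r))) * gaussianPDFReal m v t := by positivity
    linarith

lemma integral_gaussianReal_exp_neg_sq_le (m a : ℝ) {v : ℝ≥0} (hv : v ≠ 0) {r : ℝ} (hr : 0 < r) :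
    ∫ t, exp (-((a - t) ^ 2 / (2 * r))) ∂gaussianReal m v ≤
      exp (-((a - m) ^ 2 / (8 * r))) + √(r / v) * exp (-((a - m) ^ 2 / (8 * v))) := by
  set E₁ := exp (-((a - m) ^ 2 / (8 * r)))
  set E₂ := exp (-((a - m) ^ 2 / (8 * v)))
  set G := fun t ↦ exp (-((a - t) ^ 2 / (2 * r)))
  have hC : (√(2 * π * v))⁻¹ * √(2 * π * r) = √(r / v) := by
    rw [← sqrt_inv, ← sqrt_mul (by positivity)]
    congr 1
    field_simp
  have hint := integrable_exp_neg_sq_sub_div a hr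
  rw [integral_gaussianReal_eq_integral_smul hv]
  calc ∫ t, gaussianPDFReal m v t • G t
      ≤ ∫ t, (E₁ * gaussianPDFReal m v t + (√(2 * π * v))⁻¹ * E₂ * G t) :=
        integral_mono_of_nonneg
          (ae_of_all _ fun t ↦ mul_nonneg (gaussianPDFReal_nonneg m v t) (exp_pos _).le)
          (((integrable_gaussianPDFReal m v).const_mul E₁).add (hint.const_mul _))
          (ae_of_all _ fun t ↦ gaussianPDFReal_mul_exp_neg_sq_le m a t hv hr)
    _ = E₁ + √(r / v) * E₂ := by
        rw [integral_add ((integrable_gaussianPDFReal m v).const_mul E₁) (hint.const_mul _),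
          integral_const_mul, integral_const_mul, integral_gaussianPDFReal_eq_one m hv,
          integral_exp_neg_sq_sub_div, ← hC]
        ring

lemma integral_gaussianReal_exp_neg_sq_le_of_mul_le (m a : ℝ) {v : ℝ≥0} (hv : v ≠ 0) {r ρ : ℝ}
    (hr : 0 < r) (hρ : 0 < ρ) (hρr : ρ * r ≤ (a - m) ^ 2) :
    ∫ t, exp (-((a - t) ^ 2 / (2 * r))) ∂gaussianReal m v ≤ exp (-(ρ / 8)) + √(8 / ρ) := by
  have hv' : (0 : ℝ) < v := by positivity
  set w := ρ * r / (8 * v) with hw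
  have hE₁ : exp (-((a - m) ^ 2 / (8 * r))) ≤ exp (-(ρ / 8)) := by
    refine exp_le_exp.mpr (neg_le_neg ?_)
    rw [div_le_div_iff₀ (by positivity) (by positivity)]
    nlinarith
  have hE₂ : exp (-((a - m) ^ 2 / (8 * v))) ≤ exp (-w) :=
    exp_le_exp.mpr (neg_le_neg (div_le_div_of_nonneg_right hρr (by positivity)))
  have hsqrt : √(r / v) = √(8 / ρ) * √w := by
    rw [← sqrt_mul (by positivity), hw]
    congr 1
    field_simp
  calc _ ≤ exp (-((a - m) ^ 2 / (8 * r))) + √(r / v) * exp (-((a - m) ^ 2 / (8 * v))) :=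
        integral_gaussianReal_exp_neg_sq_le m a hv hr
    _ ≤ exp (-(ρ / 8)) + √(8 / ρ) * (√w * exp (-w)) := by
        rw [hsqrt, mul_assoc]
        gcongr
    _ ≤ exp (-(ρ / 8)) + √(8 / ρ) := by
        gcongr
        exact mul_le_of_le_one_right (sqrt_nonneg _) (sqrt_mul_exp_neg_le_one (by positivity))

lemma le_abs_add_ite (a : ℝ) {b : ℝ} (hb : 0 ≤ b) : b ≤ |a + if 0 ≤ a then b else -b| := by
  split_ifs with ha
  · rw [abs_of_nonneg (by linarith)]; linarith
  · rw [abs_of_neg (by linarith)]; linarith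

lemma frequently_lt_of_iInf_eq_zero {r : ℕ → ℝ} (hr : ∀ i, 0 < r i) (hinf : ⨅ i, r i = 0)
    {c : ℝ} (hc : 0 < c) : ∃ᶠ i in atTop, r i < c := by
  rw [frequently_atTop]
  intro N
  obtain ⟨j, -, hj⟩ := (Finset.range (N + 1)).exists_min_image r ⟨0, by simp⟩
  obtain ⟨i, hi⟩ := exists_lt_of_ciInf_lt (hinf.trans_lt (lt_min hc (hr j)))
  refine ⟨i, ?_, hi.trans_le (min_le_left _ _)⟩
  by_contra! hiN
  exact (hi.trans_le (min_le_right _ _)).not_ge (hj i (Finset.mem_range.mpr (by omega)))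

section InnerProductSpace

variable {E : Type*} [NormedAddCommGroup E] [InnerProductSpace ℝ E]

lemma Orthonormal.inner_right_tsum {ι : Type*} {v : ι → E} (hv : Orthonormal ℝ v) {w : ι → ℝ}
    (hw : Summable fun j ↦ w j • v j) (i : ι) : ⟪v i, ∑' j, w j • v j⟫_ℝ = w i := by
  rw [← innerSL_apply_apply ℝ, ContinuousLinearMap.map_tsum _ hw, tsum_eq_single i]
  · simp [hv.1 i]
  · intro j hj
    simp [hv.2 hj.symm]

lemma expNeg_qformDiag_half_le (e : HilbertBasis ℕ ℝ E) {r : ℕ → ℝ} {i : ℕ} (hr : 0 < r i)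
    (z : E) : expNeg (qformDiag e r z / 2) ≤ exp (-(⟪z, e i⟫_ℝ ^ 2 / (2 * r i))) := by
  have hterm : ENNReal.ofReal (⟪z, e i⟫_ℝ ^ 2 / (2 * r i)) ≤ qformDiag e r z / 2 := by
    rw [show ⟪z, e i⟫_ℝ ^ 2 / (2 * r i) = ⟪z, e i⟫_ℝ ^ 2 / r i / 2 by ring,
      ENNReal.ofReal_div_of_pos two_pos, ENNReal.ofReal_ofNat]
    exact ENNReal.div_le_div_right
      (ENNReal.le_tsum (f := fun j ↦ ENNReal.ofReal (⟪z, e j⟫_ℝ ^ 2 / r j)) i) 2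
  rw [← expNeg_ofReal_s15 (by positivity)]
  exact expNeg_antitone hterm

/-- Perturbing the coordinates along a fast-decaying subsequence `r (φ k) < (ε/4 · 4⁻ᵏ)²` by
`±2ᵏ √(r (φ k))` moves the point by at most `ε/2` and makes the ratios at least `4ᵏ`. -/
lemma Orthonormal.dense_setOf_not_bddAbove [CompleteSpace E] {v : ℕ → E} (hv : Orthonormal ℝ v)
    {r : ℕ → ℝ} (hr : ∀ i, 0 < r i) (hinf : ⨅ i, r i = 0) (c : E) :
    Dense {y : E | ¬BddAbove (Set.range fun i ↦ ⟪v i, y - c⟫_ℝ ^ 2 / r i)} := by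
  intro z
  rw [Metric.mem_closure_iff]
  intro ε hε
  obtain ⟨φ, hφ, hφr⟩ := extraction_forall_of_frequently fun k ↦
    frequently_lt_of_iInf_eq_zero hr hinf (c := (ε / 4 * (1 / 4) ^ k) ^ 2) (by positivity)
  set b : ℕ → ℝ := fun k ↦ 2 ^ k * √(r (φ k))
  set w : ℕ → ℝ := fun k ↦ if 0 ≤ ⟪v (φ k), z - c⟫_ℝ then b k else -b k
  have hb : ∀ k, b k ≤ ε / 4 * (1 / 2) ^ k := fun k ↦ calc
    b k ≤ 2 ^ k * (ε / 4 * (1 / 4) ^ k) :=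
      mul_le_mul_of_nonneg_left ((sqrt_lt' (by positivity)).mpr (hφr k)).le (by positivity)
    _ = ε / 4 * (1 / 2) ^ k := by rw [mul_left_comm, ← mul_pow]; norm_num
  have hw : ∀ k, ‖w k • v (φ k)‖ ≤ ε / 4 * (1 / 2) ^ k := fun k ↦ by
    rw [norm_smul, hv.1, mul_one, norm_eq_abs]
    have hbk : 0 ≤ b k := by positivity
    simp only [w]
    split_ifs <;> simpa [abs_of_nonneg hbk] using hb k
  have hgeom : Summable fun k : ℕ ↦ ε / 4 * (1 / 2 : ℝ) ^ k :=
    summable_geometric_two.mul_left _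
  have hsum : Summable fun k ↦ ‖w k • v (φ k)‖ := .of_nonneg_of_le (fun _ ↦ norm_nonneg _) hw hgeom
  refine ⟨z + ∑' k, w k • v (φ k), ?_, ?_⟩
  · refine not_bddAbove_iff.mpr fun M ↦ ?_
    obtain ⟨k, hk⟩ := pow_unbounded_of_one_lt M (by norm_num : (1 : ℝ) < 4)
    refine ⟨_, ⟨φ k, rfl⟩, hk.trans_le ?_⟩
    have hinner : ⟪v (φ k), z + ∑' j, w j • v (φ j) - c⟫_ℝ = ⟪v (φ k), z - c⟫_ℝ + w k := by
      rw [add_sub_right_comm, inner_add_right]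
      exact congrArg _ ((hv.comp φ hφ.injective).inner_right_tsum hsum.of_norm k)
    beta_reduce
    rw [hinner, le_div_iff₀ (hr _)]
    calc 4 ^ k * r (φ k) = b k ^ 2 := by
          rw [mul_pow, sq_sqrt (hr _).le, ← pow_mul, mul_comm k, pow_mul]; norm_num
      _ ≤ |⟪v (φ k), z - c⟫_ℝ + w k| ^ 2 := by
          gcongr
          exact le_abs_add_ite _ (by positivity)
      _ = _ := sq_abs _
  · rw [dist_self_add_right]
    calc ‖∑' k, w k • v (φ k)‖ ≤ ∑' k, ‖w k • v (φ k)‖ := norm_tsum_le_tsum_norm hsum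
      _ ≤ ∑' k : ℕ, ε / 4 * (1 / 2) ^ k := hsum.tsum_le_tsum hw hgeom
      _ < ε := by rw [tsum_mul_left, tsum_geometric_two]; linarith

variable [MeasurableSpace E]

lemma IsGaussianMeasure.map_inner_eq {μ : Measure E} {m : E} {P : E →L[ℝ] E}
    (hG : IsGaussianMeasure μ m P) {u : E} (hu : ‖u‖ = 1) {p : ℝ} (hPu : P u = p • u) :
    μ.map (⟪u, ·⟫_ℝ) = gaussianReal ⟪u, m⟫_ℝ p.toNNReal := by
  rw [hG u, hPu, real_inner_smul_right, real_inner_self_eq_norm_sq, hu, one_pow, mul_one]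

variable [BorelSpace E]

lemma integral_expNeg_qformDiag_le (e : HilbertBasis ℕ ℝ E) {r : ℕ → ℝ} {i : ℕ} (hr : 0 < r i)
    {μ : Measure E} [IsFiniteMeasure μ] {m : E} {P : E →L[ℝ] E} (hG : IsGaussianMeasure μ m P)
    {p : ℝ} (hPe : P (e i) = p • e i) (y : E) :
    ∫ x, expNeg (qformDiag e r (y - x) / 2) ∂μ ≤
      ∫ t, exp (-((⟪e i, y⟫_ℝ - t) ^ 2 / (2 * r i))) ∂gaussianReal ⟪e i, m⟫_ℝ p.toNNReal := by
  rw [← hG.map_inner_eq (e.orthonormal.1 i) hPe, integral_map (by fun_prop) (by fun_prop)]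
  refine integral_mono_of_nonneg (ae_of_all _ fun x ↦ expNeg_nonneg _) ?_
    (ae_of_all _ fun x ↦ ?_)
  · refine Integrable.of_bound (by fun_prop) 1 (ae_of_all _ fun x ↦ ?_)
    rw [norm_of_nonneg (exp_pos _).le, exp_le_one_iff, neg_nonpos]
    positivity
  · simpa [inner_sub_left, real_inner_comm] using expNeg_qformDiag_half_le e hr (y - x)

lemma integral_expNeg_qformDiag_eq_zero (e : HilbertBasis ℕ ℝ E) {p r : ℕ → ℝ}
    (hp : ∀ i, 0 < p i) (hr : ∀ i, 0 < r i) {μ : Measure E} [IsFiniteMeasure μ] {m : E}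
    {P : E →L[ℝ] E} (hG : IsGaussianMeasure μ m P) (hPe : ∀ i, P (e i) = p i • e i) {y : E}
    (hy : ¬BddAbove (Set.range fun i ↦ ⟪e i, y - m⟫_ℝ ^ 2 / r i)) :
    ∫ x, expNeg (qformDiag e r (y - x) / 2) ∂μ = 0 := by
  have hbound : ∀ ρ > 0,
      ∫ x, expNeg (qformDiag e r (y - x) / 2) ∂μ ≤ exp (-(ρ / 8)) + √(8 / ρ) := by
    intro ρ hρ
    obtain ⟨_, ⟨i, rfl⟩, hi⟩ := not_bddAbove_iff.mp hy ρ
    rw [lt_div_iff₀ (hr i), inner_sub_right] at hi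
    exact (integral_expNeg_qformDiag_le e (hr i) hG (hPe i) y).trans
      (integral_gaussianReal_exp_neg_sq_le_of_mul_le _ _ (by simpa using hp i) (hr i) hρ hi.le)
  have hlim : Tendsto (fun ρ : ℝ ↦ exp (-(ρ / 8)) + √(8 / ρ)) atTop (𝓝 0) := by
    have h₁ := tendsto_exp_neg_atTop_nhds_zero.comp
      (tendsto_id.atTop_div_const (by norm_num : (0 : ℝ) < 8))
    have h₂ := (continuous_sqrt.tendsto 0).comp
      (tendsto_const_nhds (x := (8 : ℝ)).div_atTop tendsto_id)
    simpa using h₁.add h₂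
  exact le_antisymm (ge_of_tendsto hlim ((eventually_gt_atTop 0).mono hbound))
    (integral_nonneg fun x ↦ expNeg_nonneg _)

end InnerProductSpace

theorem stmt15_general (e : HilbertBasis ℕ ℝ H) (p r : ℕ → ℝ)
    (hp : ∀ i, 0 < p i) (hr : ∀ i, 0 < r i)
    (mf : H) (Pf : H →L[ℝ] H)
    (hPe : ∀ i, Pf (e i) = p i • e i)
    (μf : Measure H) [IsProbabilityMeasure μf] (hG : IsGaussianMeasure μf mf Pf)
    (hinf : ⨅ i, r i = 0) :
    Dense {y : H | ∫ x, expNeg (qformDiag e r (y - x) / 2) ∂μf = 0} :=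
  (e.orthonormal.dense_setOf_not_bddAbove hr hinf mf).mono fun _ hy ↦
    integral_expNeg_qformDiag_eq_zero e hp hr hG hPe hy

theorem stmt15 (e : HilbertBasis ℕ ℝ H) (p r : ℕ → ℝ)
    (hp : ∀ i, 0 < p i) (hr : ∀ i, 0 < r i) (hps : Summable p)
    (mf : H) (Pf R : H →L[ℝ] H)
    (hPe : ∀ i, Pf (e i) = p i • e i) (hRe : ∀ i, R (e i) = r i • e i)
    (hRsa : IsSelfAdjoint R) (hRpos : ∀ u, 0 ≤ ⟪R u, u⟫_ℝ)
    (hcomm : Pf ∘L R = R ∘L Pf)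
    (μf : Measure H) [IsProbabilityMeasure μf] (hG : IsGaussianMeasure μf mf Pf)
    (hinf : ⨅ i, r i = 0) :
    Dense {y : H | ∫ x, expNeg (qformDiag e r (y - x) / 2) ∂μf = 0} :=
  stmt15_general e p r hp hr mf Pf hPe μf hG hinf
end
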